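/- For each index i, the real function f(t) = ℓ evaluated with the diagonal entry a_i of A replaced by t (keeping all other entries of A, V, μ fixed) is differentiable at t = a_i and its derivative equals (1/2)·(Σ_{ii} − r_i²), where Σ_{ii} is the (i,i)-entry of Σ = Ω⁻¹ and r_i = y_i − μ_i. -/

import Mathlib

open Matrix

/-!
Moving `a i` to `t` perturbs `Ω` by the rank-one matrix `(t - a i) • single i i 1`, which only
changes row `i`. By multilinearity of the determinant in that row, `det Ω(t)` is affine in `t` with
slope the cofactor `adj(Ω) i i`, and the quadratic form `rᵀ Ω(t) r` is affine with slope `r i ^ 2`.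
Hence `d/dt log det Ω(t) = adj(Ω) i i / det Ω = Ω⁻¹ i i`, where `det Ω > 0` because `Ω` is
positive definite.
-/

/-- Multivariate Gaussian log-likelihood in the low-rank precision parametrization
`Ω = A + V·Vᵀ` with `A = diagonal a`:
`ℓ = -(D/2)·log(2π) + (1/2)·log(det Ω) - (1/2)·(y-μ)ᵀ Ω (y-μ)`. -/
noncomputable def gaussLRLL (D R : ℕ) (y μ : Fin D → ℝ) (a : Fin D → ℝ)
    (V : Matrix (Fin D) (Fin R) ℝ) : ℝ :=
  -((D : ℝ) / 2) * Real.log (2 * Real.pi)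
    + (1 / 2) * Real.log (Matrix.diagonal a + V * V.transpose).det
    - (1 / 2) * ((y - μ) ⬝ᵥ (Matrix.diagonal a + V * V.transpose).mulVec (y - μ))

namespace Matrix

section CommRing

variable {n R : Type*} [DecidableEq n] [CommRing R]

theorem diagonal_update (a : n → R) (i : n) (t : R) :
    diagonal (Function.update a i t) = diagonal a + (t - a i) • single i i 1 := by
  ext k j
  by_cases hk : k = i
  · subst hk; by_cases hj : k = j <;> simp [hj]
  · simp [hk, Ne.symm hk, diagonal_apply]

theorem add_smul_single_eq_updateRow (M : Matrix n n R) (i : n) (s : R) :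
    M + s • single i i 1 = M.updateRow i (M i + s • Pi.single i 1) := by
  ext k j
  by_cases hk : k = i
  · subst hk; by_cases hj : k = j <;> simp [hj]
  · simp [hk, Ne.symm hk]

variable [Fintype n]

theorem det_add_smul_single (M : Matrix n n R) (i : n) (s : R) :
    (M + s • single i i 1).det = M.det + s * M.adjugate i i := by
  rw [add_smul_single_eq_updateRow, det_updateRow_add, det_updateRow_smul, updateRow_eq_self,
    adjugate_apply]

theorem dotProduct_add_smul_single_mulVec (M : Matrix n n R) (i : n) (s : R) (r : n → R) :
    r ⬝ᵥ (M + s • single i i 1) *ᵥ r = r ⬝ᵥ M *ᵥ r + s * r i ^ 2 := by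
  rw [add_mulVec, dotProduct_add, smul_mulVec, dotProduct_smul, single_mulVec_eq]
  simp [dotProduct_single, sq]

end CommRing

section Real

variable {n : Type*} [Fintype n] [DecidableEq n]

theorem hasDerivAt_log_det_add_smul_single {M : Matrix n n ℝ} (hM : M.det ≠ 0) (i : n) (t₀ : ℝ) :
    HasDerivAt (fun t : ℝ => Real.log (M + (t - t₀) • single i i 1).det) (M⁻¹ i i) t₀ := by
  simp_rw [det_add_smul_single]
  have hdet := (((hasDerivAt_id t₀).sub_const t₀).mul_const (M.adjugate i i)).const_add M.det
  simpa [inv_def, Ring.inverse_eq_inv, div_eq_inv_mul] using hdet.log (by simpa using hM)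

theorem hasDerivAt_dotProduct_add_smul_single_mulVec (M : Matrix n n ℝ) (i : n) (r : n → ℝ)
    (t₀ : ℝ) :
    HasDerivAt (fun t : ℝ => r ⬝ᵥ (M + (t - t₀) • single i i 1) *ᵥ r) (r i ^ 2) t₀ := by
  simp_rw [dotProduct_add_smul_single_mulVec]
  simpa using (((hasDerivAt_id t₀).sub_const t₀).mul_const (r i ^ 2)).const_add (r ⬝ᵥ M *ᵥ r)

theorem posDef_diagonal_add_mul_transpose {m : Type*} [Fintype m] {a : n → ℝ} (ha : ∀ k, 0 < a k)
    (V : Matrix n m ℝ) : (diagonal a + V * Vᵀ).PosDef := by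
  have hVVt : (V * Vᵀ).PosSemidef := by
    simpa [conjTranspose_eq_transpose_of_trivial] using posSemidef_self_mul_conjTranspose V
  exact (PosDef.diagonal ha).add_posSemidef hVVt

end Real

end Matrix

theorem gaussLR_deriv_a_general (D R : ℕ) (y μ : Fin D → ℝ)
    (a : Fin D → ℝ) (ha : ∀ k, 0 < a k)
    (V : Matrix (Fin D) (Fin R) ℝ) (i : Fin D) :
    HasDerivAt (fun t : ℝ => gaussLRLL D R y μ (Function.update a i t) V)
      ((1 / 2) * (((Matrix.diagonal a + V * V.transpose)⁻¹) i i - (y i - μ i) ^ 2))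
      (a i) := by
  set Ω := diagonal a + V * Vᵀ
  have hΩ : ∀ t, diagonal (Function.update a i t) + V * Vᵀ = Ω + (t - a i) • single i i 1 := by
    intro t
    rw [diagonal_update, add_right_comm]
  have hlogdet := hasDerivAt_log_det_add_smul_single
    (posDef_diagonal_add_mul_transpose ha V).det_pos.ne' i (a i)
  have hquad := hasDerivAt_dotProduct_add_smul_single_mulVec Ω i (y - μ) (a i)
  simp only [gaussLRLL, hΩ]
  refine (((hlogdet.const_mul (1 / 2)).const_add _).sub (hquad.const_mul (1 / 2))).congr_deriv ?_
  simp only [Pi.sub_apply]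
  ring

/-- First partial derivative of the low-rank Gaussian log-likelihood with respect to the
diagonal entry `a_i`: it equals `(1/2)·(Σ_{ii} - r_i²)` where `Σ = Ω⁻¹` and `r = y - μ`. -/
theorem gaussLR_deriv_a (D R : ℕ) (hD : 1 ≤ D) (y μ : Fin D → ℝ)
    (a : Fin D → ℝ) (ha : ∀ k, 0 < a k)
    (V : Matrix (Fin D) (Fin R) ℝ) (i : Fin D) :
    HasDerivAt (fun t : ℝ => gaussLRLL D R y μ (Function.update a i t) V)
      ((1 / 2) * (((Matrix.diagonal a + V * V.transpose)⁻¹) i i - (y i - μ i) ^ 2))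
      (a i) :=
  gaussLR_deriv_a_general D R y μ a ha V i
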